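/- Let α ≥ 2 be an integer and let C be a minimal d_α-D_α cut in A_α with C ≠ {d_α}. Then for every nonempty S ⊆ {1,…,α−1}: d_S ∉ C if and only if x_{T∪{α}} ∈ C for every nonempty T ⊆ {1,…,α−1} with T ∩ S ≠ ∅. -/

import Mathlib

/-- Raw vertex names for the auxiliary graph `A_α`: the special vertex `top = d_α`,
vertices `d S`, and vertices `x S`. -/
inductive AV : Type where
  | top : AV
  | d : Finset ℕ → AV
  | x : Finset ℕ → AV
deriving DecidableEq

/-- The vertices actually present in `A_α`: `d_α`; `d S` for nonempty
`S ⊆ {1, …, α-1}`; and `x S` for `S ⊆ {1, …, α}` with `|S| ≥ 2`. -/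
def AValid (α : ℕ) : AV → Prop
  | AV.top => True
  | AV.d S => S.Nonempty ∧ S ⊆ Finset.Icc 1 (α - 1)
  | AV.x S => 2 ≤ S.card ∧ S ⊆ Finset.Icc 1 α

/-- One-sided adjacency for `A_α`: `d_α x_S` when `α ∈ S`; `d_S x_T` when
`S ∩ T ≠ ∅`; `x_S x_T` when `S ≠ T` and `S ∩ T ≠ ∅`. -/
def AAdj (α : ℕ) : AV → AV → Prop
  | AV.top, AV.x S => α ∈ S
  | AV.d S, AV.x T => (S ∩ T).Nonempty
  | AV.x S, AV.x T => S ≠ T ∧ (S ∩ T).Nonempty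
  | _, _ => False

/-- The auxiliary graph `A_α`, on the valid vertices. -/
def Agraph (α : ℕ) : SimpleGraph {v : AV // AValid α v} where
  Adj a b := AAdj α a.1 b.1 ∨ AAdj α b.1 a.1
  symm := ⟨fun _ _ h => Or.symm h⟩
  loopless := by
    constructor
    rintro ⟨v, hv⟩ h
    rcases v with _ | S | S <;> simp only [AAdj] at h <;> tauto

/-- The vertex `d_α` of `A_α`. -/
def dTop (α : ℕ) : {v : AV // AValid α v} := ⟨AV.top, trivial⟩

/-- The set `D_α = {d_S : S ⊆ {1, …, α-1}, S ≠ ∅}` of vertices of `A_α`. -/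
def Dset (α : ℕ) : Set {v : AV // AValid α v} := {v | ∃ S, v.1 = AV.d S}

/-- `C` is an `A`-`B` cut in `G`: the graph `G - C` (i.e. the subgraph of `G`
induced on `Cᶜ`) contains no path from `A \ C` to `B \ C`. -/
def IsCut {V : Type*} (G : SimpleGraph V) (A B C : Set V) : Prop :=
  ∀ (a b : ↥(Cᶜ : Set V)), (a : V) ∈ A → (b : V) ∈ B →
    ¬ (G.induce (Cᶜ : Set V)).Reachable a b

/-- `C` is a minimal `A`-`B` cut in `G`. -/
def IsMinimalCut {V : Type*} (G : SimpleGraph V) (A B C : Set V) : Prop :=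
  IsCut G A B C ∧ ∀ x ∈ C, ¬ IsCut G A B (C \ {x})

/-- Validity of the vertex `x_{S ∪ {α}}` for nonempty `S ⊆ {1, …, α-1}`. -/
lemma aValid_x_union (α : ℕ) (hα : 2 ≤ α) (S : Finset ℕ)
    (hS : S ⊆ Finset.Icc 1 (α - 1)) (hne : S.Nonempty) :
    AValid α (AV.x (S ∪ {α})) := by
  have hαS : α ∉ S := by
    intro h
    have := (Finset.mem_Icc.1 (hS h)).2
    omega
  constructor
  · have hcard : (S ∪ {α}).card = S.card + 1 := by
      rw [Finset.union_comm, ← Finset.insert_eq, Finset.card_insert_of_notMem hαS]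
    have : 1 ≤ S.card := Finset.one_le_card.2 hne
    omega
  · refine Finset.union_subset (hS.trans (Finset.Icc_subset_Icc le_rfl (Nat.sub_le α 1))) ?_
    simp only [Finset.singleton_subset_iff, Finset.mem_Icc]
    omega

/-- Validity of the vertex `x_R` for `R ⊆ {1, …, α-1}` with `|R| ≥ 2`. -/
lemma aValid_x_low (α : ℕ) (R : Finset ℕ) (hR : R ⊆ Finset.Icc 1 (α - 1))
    (hcard : 2 ≤ R.card) : AValid α (AV.x R) :=
  ⟨hcard, hR.trans (Finset.Icc_subset_Icc le_rfl (Nat.sub_le α 1))⟩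

/-!
Since `C ≠ {d_α}`, minimality forces `d_α ∉ C`, and then every `c ∈ C` has a neighbour
reachable from `d_α` in `A_α - C` and, unless `c ∈ D_α`, a neighbour from which `D_α \ C` is
reachable in `A_α - C`.

If `d_S ∉ C`, each path `d_α – x_{T ∪ {α}} – d_S` is cut at its middle vertex. If `d_S ∈ C`,
take its neighbour `x_U` reachable from `d_α`; then `T = U \ {α}` meets `S`, so
`x_{T ∪ {α}} ∈ C`. Every neighbour of `x_{T ∪ {α}}` is `d_α`, a neighbour of `d_α`, `x_U` or a
neighbour of `x_U`, hence reachable from `d_α`; this contradicts the existence of a neighbour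
from which `D_α \ C` is reachable.
-/

section Cut

variable {V : Type*} {G : SimpleGraph V} {A B C : Set V} {u v w c : V}

def ReachableOutside (G : SimpleGraph V) (C : Set V) (u v : V) : Prop :=
  ∃ (hu : u ∉ C) (hv : v ∉ C), (G.induce Cᶜ).Reachable ⟨u, hu⟩ ⟨v, hv⟩

namespace ReachableOutside

theorem refl (hu : u ∉ C) : ReachableOutside G C u u :=
  ⟨hu, hu, .refl _⟩

theorem of_adj (h : G.Adj u v) (hu : u ∉ C) (hv : v ∉ C) : ReachableOutside G C u v :=
  ⟨hu, hv, SimpleGraph.Adj.reachable (G := G.induce Cᶜ) h⟩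

theorem symm (h : ReachableOutside G C u v) : ReachableOutside G C v u :=
  let ⟨hu, hv, r⟩ := h
  ⟨hv, hu, r.symm⟩

theorem trans (h : ReachableOutside G C u v) (h' : ReachableOutside G C v w) :
    ReachableOutside G C u w :=
  let ⟨hu, _, r⟩ := h
  let ⟨_, hw, r'⟩ := h'
  ⟨hu, hw, r.trans r'⟩

theorem notMem_left (h : ReachableOutside G C u v) : u ∉ C := h.1

theorem notMem_right (h : ReachableOutside G C u v) : v ∉ C := h.2.1

/-- A walk of `G - (C \ {c})` leaving a set `K` that is closed in `G - C` leaves it through `c`. -/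
theorem exists_adj_of_sdiff_singleton {K : Set V} (h : ReachableOutside G (C \ {c}) u v)
    (hK : ∀ x y, x ∈ K → y ∉ C → G.Adj x y → y ∈ K) (hu : u ∈ K) (hv : v ∉ K) :
    ∃ x ∈ K, G.Adj x c := by
  obtain ⟨_, _, ⟨p⟩⟩ := h
  set q := p.map (SimpleGraph.Embedding.induce _).toHom
  obtain ⟨d, hd, hd₁, hd₂⟩ := q.exists_boundary_dart K hu hv
  obtain ⟨y, -, hy⟩ := List.mem_map.1 <|
    (SimpleGraph.Walk.support_map _ p) ▸ q.dart_snd_mem_support_of_mem_darts hd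
  have hsnd : d.snd ∉ C \ {c} := hy ▸ y.2
  have hdc : d.snd = c := by
    by_contra hne
    exact hd₂ (hK _ _ hd₁ (fun hC => hsnd ⟨hC, hne⟩) d.adj)
  exact ⟨d.fst, hd₁, hdc ▸ d.adj⟩

end ReachableOutside

theorem isCut_iff : IsCut G A B C ↔ ∀ a ∈ A, ∀ b ∈ B, ¬ ReachableOutside G C a b :=
  ⟨fun h a ha b hb ⟨haC, hbC, r⟩ => h ⟨a, haC⟩ ⟨b, hbC⟩ ha hb r,
    fun h a b ha hb r => h a ha b hb ⟨a.2, b.2, r⟩⟩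

theorem IsCut.symm (h : IsCut G A B C) : IsCut G B A C :=
  isCut_iff.2 fun b hb a ha r => isCut_iff.1 h a ha b hb r.symm

theorem IsMinimalCut.symm (h : IsMinimalCut G A B C) : IsMinimalCut G B A C :=
  ⟨h.1.symm, fun x hx hcut => h.2 x hx hcut.symm⟩

theorem IsMinimalCut.eq_of_subset (h : IsMinimalCut G A B C) (hAC : A ⊆ C) : C = A := by
  refine Set.Subset.antisymm (fun x hx => ?_) hAC
  by_contra hxA
  refine h.2 x hx (isCut_iff.2 fun a ha b _ r => r.notMem_left ⟨hAC ha, ?_⟩)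
  rintro rfl
  exact hxA ha

theorem IsMinimalCut.exists_reachableOutside_adj_of_mem (h : IsMinimalCut G A B C)
    (hc : c ∈ C) (hcA : c ∉ A) :
    ∃ a ∈ A, ∃ x, ReachableOutside G C a x ∧ G.Adj x c := by
  obtain ⟨a, ha, b, hb, r⟩ : ∃ a ∈ A, ∃ b ∈ B, ReachableOutside G (C \ {c}) a b := by
    simpa [isCut_iff] using h.2 c hc
  have haC : a ∉ C := fun haC => r.notMem_left ⟨haC, by rintro rfl; exact hcA ha⟩
  obtain ⟨x, ⟨a', ha', hx⟩, hxc⟩ :=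
    r.exists_adj_of_sdiff_singleton (K := {x | ∃ a ∈ A, ReachableOutside G C a x})
      (fun x y ⟨a, ha, hx⟩ hy hxy => ⟨a, ha, hx.trans (.of_adj hxy hx.notMem_right hy)⟩)
      ⟨a, ha, .refl haC⟩ (fun ⟨a', ha', r'⟩ => isCut_iff.1 h.1 a' ha' b hb r')
  exact ⟨a', ha', x, hx, hxc⟩

theorem IsMinimalCut.exists_adj_reachableOutside_of_mem (h : IsMinimalCut G A B C)
    (hc : c ∈ C) (hcB : c ∉ B) :
    ∃ b ∈ B, ∃ x, G.Adj c x ∧ ReachableOutside G C x b :=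
  let ⟨b, hb, x, hx, hxc⟩ := h.symm.exists_reachableOutside_adj_of_mem hc hcB
  ⟨b, hb, x, hxc.symm, hx.symm⟩

end Cut

theorem inter_nonempty_of_inter_erase_union {X U : Finset ℕ} {a : ℕ}
    (h : (X ∩ (U.erase a ∪ {a})).Nonempty) (ha : a ∉ X) : (X ∩ U).Nonempty := by
  obtain ⟨e, he⟩ := h
  simp only [Finset.mem_inter, Finset.mem_union, Finset.mem_erase, Finset.mem_singleton] at he
  obtain ⟨heX, ⟨-, heU⟩ | rfl⟩ := he
  exacts [⟨e, Finset.mem_inter.2 ⟨heX, heU⟩⟩, absurd heX ha]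

section Agraph

variable {α : ℕ}

theorem agraph_adj {a b : {v : AV // AValid α v}} :
    (Agraph α).Adj a b ↔ AAdj α a.1 b.1 ∨ AAdj α b.1 a.1 :=
  Iff.rfl

theorem self_notMem_of_subset_Icc {S : Finset ℕ} (hS : S ⊆ Finset.Icc 1 (α - 1)) : α ∉ S :=
  fun h => by have := Finset.mem_Icc.1 (hS h); omega

theorem erase_subset_Icc_of_aValid {U : Finset ℕ} (hU : AValid α (AV.x U)) :
    U.erase α ⊆ Finset.Icc 1 (α - 1) := fun e he => by
  have := Finset.mem_Icc.1 (hU.2 (Finset.mem_of_mem_erase he))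
  have := Finset.ne_of_mem_erase he
  simp only [Finset.mem_Icc]
  omega

theorem erase_nonempty_of_aValid {U : Finset ℕ} (hU : AValid α (AV.x U)) :
    (U.erase α).Nonempty := by
  rw [← Finset.card_pos]
  have := Finset.pred_card_le_card_erase (s := U) (a := α)
  have := hU.1
  omega

theorem exists_eq_x_of_adj_d {S : Finset ℕ} {hS : AValid α (AV.d S)}
    {u : {v : AV // AValid α v}} (h : (Agraph α).Adj u ⟨AV.d S, hS⟩) :
    ∃ U hU, u = ⟨AV.x U, hU⟩ ∧ (S ∩ U).Nonempty := by
  obtain ⟨_ | _ | U, hU⟩ := u <;> simp only [agraph_adj, AAdj, false_or, or_false] at h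
  exact ⟨U, hU, rfl, h⟩

theorem adj_x_erase_union {U : Finset ℕ} (hU : AValid α (AV.x U))
    {hU' : AValid α (AV.x (U.erase α ∪ {α}))} {w : {v : AV // AValid α v}}
    (h : (Agraph α).Adj ⟨AV.x (U.erase α ∪ {α}), hU'⟩ w) :
    w = dTop α ∨ (Agraph α).Adj (dTop α) w ∨ w = ⟨AV.x U, hU⟩ ∨
      (Agraph α).Adj ⟨AV.x U, hU⟩ w := by
  obtain ⟨_ | S | V, hw⟩ := w
  · exact Or.inl rfl
  · simp only [agraph_adj, AAdj, false_or] at h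
    exact .inr <| .inr <| .inr <| .inr <|
      inter_nonempty_of_inter_erase_union h (self_notMem_of_subset_Icc hw.2)
  · have hVW : (V ∩ (U.erase α ∪ {α})).Nonempty := by
      simp only [agraph_adj, AAdj] at h
      rcases h with ⟨-, h⟩ | ⟨-, h⟩
      exacts [Finset.inter_comm V _ ▸ h, h]
    by_cases hαV : α ∈ V
    · exact .inr <| .inl <| .inl hαV
    have hVU := inter_nonempty_of_inter_erase_union hVW hαV
    by_cases hVeq : V = U
    · subst hVeq
      exact .inr <| .inr <| .inl rfl
    · exact .inr <| .inr <| .inr <| .inl ⟨Ne.symm hVeq, Finset.inter_comm V U ▸ hVU⟩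

end Agraph

/-- Let `C` be a minimal `d_α`-`D_α` cut in `A_α` with `C ≠ {d_α}`.  For every
nonempty `S ⊆ {1, …, α-1}`: `d_S ∉ C` if and only if `x_{T ∪ {α}} ∈ C` for every
nonempty `T ⊆ {1, …, α-1}` with `T ∩ S ≠ ∅`. -/
theorem cut_d_iff (α : ℕ) (hα : 2 ≤ α) (C : Set {v : AV // AValid α v})
    (hC : IsMinimalCut (Agraph α) {dTop α} (Dset α) C) (hCne : C ≠ {dTop α})
    (S : Finset ℕ) (hSne : S.Nonempty) (hS : S ⊆ Finset.Icc 1 (α - 1)) :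
    (⟨AV.d S, hSne, hS⟩ : {v : AV // AValid α v}) ∉ C ↔
      ∀ (T : Finset ℕ) (hTne : T.Nonempty) (hT : T ⊆ Finset.Icc 1 (α - 1)),
        (T ∩ S).Nonempty →
        (⟨AV.x (T ∪ {α}), aValid_x_union α hα T hT hTne⟩ :
          {v : AV // AValid α v}) ∈ C := by
  have htop : dTop α ∉ C := fun h => hCne (hC.eq_of_subset (Set.singleton_subset_iff.2 h))
  have hsep : ∀ b ∈ Dset α, ¬ ReachableOutside (Agraph α) C (dTop α) b :=
    isCut_iff.1 hC.1 _ rfl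
  constructor
  · intro hdS T hTne hT hTS
    by_contra hxT
    have hxd : (Agraph α).Adj ⟨AV.x (T ∪ {α}), aValid_x_union α hα T hT hTne⟩
        ⟨AV.d S, hSne, hS⟩ :=
      .inr <| (Finset.inter_comm T S ▸ hTS).mono <|
        Finset.inter_subset_inter_left Finset.subset_union_left
    exact hsep _ ⟨S, rfl⟩ <|
      (ReachableOutside.of_adj (Or.inl (Finset.mem_union_right T (Finset.mem_singleton_self α)))
        htop hxT).trans (.of_adj hxd hxT hdS)
  · intro H hdC
    obtain ⟨_, rfl, u, hu, hud⟩ :=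
      hC.exists_reachableOutside_adj_of_mem hdC fun h => AV.noConfusion (congrArg Subtype.val h)
    obtain ⟨U, hU, rfl, hSU⟩ := exists_eq_x_of_adj_d hud
    have hSU' : (U.erase α ∩ S).Nonempty := by
      rwa [Finset.inter_comm, Finset.inter_erase, Finset.erase_eq_of_notMem
        fun h => self_notMem_of_subset_Icc hS (Finset.mem_inter.1 h).1]
    have hxC := H (U.erase α) (erase_nonempty_of_aValid hU) (erase_subset_Icc_of_aValid hU) hSU'
    obtain ⟨b, hb, w, hxw, hwb⟩ :=
      hC.exists_adj_reachableOutside_of_mem hxC fun ⟨_, h⟩ => AV.noConfusion h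
    have hw : ReachableOutside (Agraph α) C (dTop α) w := by
      rcases adj_x_erase_union hU hxw with rfl | h | rfl | h
      · exact .refl htop
      · exact .of_adj h htop hwb.notMem_left
      · exact hu
      · exact hu.trans (.of_adj h hu.notMem_right hwb.notMem_left)
    exact hsep b hb (hw.trans hwb)
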